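/- Let f : {0,1}^n → {0,1} and, for each j ∈ [n], let f_j : {0,1}^m → {0,1}. Define g : {0,1}^m → {0,1} by g(x) = f(f_1(x), f_2(x), …, f_n(x)). Let P be a span program on n variables computing f_P = f, and for each j ∈ [n] let P_j be a span program on m variables computing f_{P_j} = f_j. Then there exists a span program Q on m variables computing f_Q = g such that for every cost vector s ∈ [0,∞)^m, setting r_j = wsize_s(P_j, {0,1}^m) for j ∈ [n], one has wsize_s(Q, {0,1}^m) ≤ wsize_r(P, {0,1}^n). In particular, wsize_s(Q, {0,1}^m) ≤ wsize(P, {0,1}^n) · max_{j∈[n]} wsize_s(P_j, {0,1}^m). -/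

import Mathlib

open scoped ComplexInnerProductSpace

/-- A span program on `n` boolean variables: an inner product space `ℂ^d`, a target vector,
and input vectors indexed by `Fin m`, each either free (`label i = none`) or labeled by a
pair `(j, b)` (`label i = some (j, b)`, meaning `i ∈ I_{j,b}`). -/
structure SpanProgram (n : ℕ) : Type where
  d : ℕ
  m : ℕ
  label : Fin m → Option (Fin n × Bool)
  target : EuclideanSpace ℂ (Fin d)
  input : Fin m → EuclideanSpace ℂ (Fin d)

namespace SpanProgram

variable {n : ℕ}

/-- Input vector `i` is available on input `x`: it is free, or labeled `(j, x_j)` for some `j`. -/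
def avail (P : SpanProgram n) (x : Fin n → Bool) (i : Fin P.m) : Prop :=
  P.label i = none ∨ ∃ j : Fin n, P.label i = some (j, x j)

instance (P : SpanProgram n) (x : Fin n → Bool) (i : Fin P.m) : Decidable (P.avail x i) :=
  inferInstanceAs (Decidable (P.label i = none ∨ ∃ j : Fin n, P.label i = some (j, x j)))

/-- The boolean function computed by `P`:  `f_P(x) = 1` iff the target is in the range of
`A ∘ Π(x)`, i.e. the target is a linear combination of the available input vectors. -/
def eval (P : SpanProgram n) (x : Fin n → Bool) : Prop :=
  ∃ w : Fin P.m → ℂ, ∑ i, (if P.avail x i then w i else 0) • P.input i = P.target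

/-- The squared cost weight of coordinate `i`:  `s j` if `i ∈ I_{j,b}`, and `0` if `i` is free.
Thus `‖S w‖² = ∑ i, P.cw s i * ‖w i‖²`. -/
def cw (P : SpanProgram n) (s : Fin n → ℝ) (i : Fin P.m) : ℝ :=
  match P.label i with
  | none => 0
  | some jb => s jb.1

open Classical in
/-- The witness size of `P` on input `x` with costs `s`. -/
noncomputable def wsizex (P : SpanProgram n) (s : Fin n → ℝ) (x : Fin n → Bool) : ℝ :=
  if P.eval x then
    sInf { r : ℝ | ∃ w : Fin P.m → ℂ,
      (∑ i, (if P.avail x i then w i else 0) • P.input i = P.target) ∧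
      r = ∑ i, P.cw s i * ‖w i‖ ^ 2 }
  else
    sInf { r : ℝ | ∃ w' : EuclideanSpace ℂ (Fin P.d), ⟪P.target, w'⟫ = 1 ∧
      (∀ i, P.avail x i → ⟪P.input i, w'⟫ = 0) ∧
      r = ∑ i, P.cw s i * ‖⟪P.input i, w'⟫‖ ^ 2 }

/-- The witness size of `P` with costs `s`, restricted to the domain `D`:
`max_{x ∈ D} wsize_s(P, x)`. -/
noncomputable def wsizeD (P : SpanProgram n) (s : Fin n → ℝ) (D : Set (Fin n → Bool)) : ℝ :=
  sSup { r : ℝ | ∃ x ∈ D, r = P.wsizex s x }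

end SpanProgram

/-!
The program `Q` substitutes, for every input vector `vᵢ` of `P`, a span program computing the
literal of `vᵢ`: `P_j` for a label `x_j`, the dual of `P_j` (which computes `¬f_j` with no larger
witness sizes) for `¬x_j`, and a program accepting everything for a free input. In the space
`E × Πᵢ Eᵢ` the vector `vᵢ` becomes `(vᵢ, -tᵢ)`, tying it to the target of the `i`-th inner
program. An outer positive witness `w` and inner positive witnesses `γᵢ` then combine into the
composed witness `(wᵢ, wᵢ γᵢ)` of cost `∑ᵢ |wᵢ|² cost(γᵢ)`; dually an outer negative witness `y`
and inner negative witnesses `zᵢ` combine into `(y, ⟪vᵢ, y⟫ zᵢ)`. Taking the inner witnesses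
nearly optimal, every outer witness of `r`-cost `C` yields a composed witness of `s`-cost at most
`C + ε`. The second bound follows because witness size is monotone and homogeneous in the costs.
-/

noncomputable section

lemma PiLp.inner_single_left {ι : Type*} [Fintype ι] [DecidableEq ι] {F : ι → Type*}
    [∀ i, NormedAddCommGroup (F i)] [∀ i, InnerProductSpace ℂ (F i)] (i : ι) (a : F i)
    (z : PiLp 2 F) : ⟪PiLp.single 2 i a, z⟫ = ⟪a, z i⟫ := by
  rw [PiLp.inner_apply, Finset.sum_eq_single i
    (fun j _ hj => by rw [PiLp.single_eq_of_ne 2 hj, inner_zero_left]) (by simp),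
    PiLp.single_eq_same]

lemma le_of_forall_pos_le_add_mul {a b C : ℝ} (hC : 0 ≤ C) (h : ∀ δ > 0, a ≤ b + δ * C) :
    a ≤ b := by
  refine le_of_forall_pos_le_add fun ε hε => (h (ε / (C + 1)) (by positivity)).trans ?_
  gcongr
  rw [div_mul_eq_mul_div, div_le_iff₀ (by positivity)]
  nlinarith

namespace SpanProgram

section Witness

variable {ι E : Type*} [Fintype ι] [NormedAddCommGroup E] [InnerProductSpace ℂ E]
  (v : ι → E) (t : E) (A : ι → Prop) [DecidablePred A]

def IsPositiveWitness (w : ι → ℂ) : Prop :=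
  ∑ i, (if A i then w i else 0) • v i = t

def Accepts : Prop :=
  ∃ w, IsPositiveWitness v t A w

def IsNegativeWitness (u : E) : Prop :=
  ⟪t, u⟫ = 1 ∧ ∀ i, A i → ⟪v i, u⟫ = 0

def posCost (c : ι → ℝ) (w : ι → ℂ) : ℝ :=
  ∑ i, c i * ‖w i‖ ^ 2

def negCost (c : ι → ℝ) (u : E) : ℝ :=
  ∑ i, c i * ‖⟪v i, u⟫‖ ^ 2

open Classical in
/-- Witness sizes are defined for any family of vectors, with availability `A` and a weight per
input vector rather than per variable: in the composition, the weight of input `i` is the witness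
size of the program substituted for it. -/
def witnessSize (c : ι → ℝ) : ℝ :=
  if Accepts v t A then sInf (posCost c '' {w | IsPositiveWitness v t A w})
  else sInf (negCost v c '' {u | IsNegativeWitness v t A u})

variable {v t A}

lemma accepts_iff_mem_span :
    Accepts v t A ↔ t ∈ Submodule.span ℂ (Set.range fun i => if A i then v i else 0) := by
  simp only [Submodule.mem_span_range_iff_exists_fun, Accepts, IsPositiveWitness, smul_ite,
    ite_smul, smul_zero, zero_smul]

lemma not_accepts_of_isNegativeWitness {u : E} (hu : IsNegativeWitness v t A u) :
    ¬ Accepts v t A := by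
  rintro ⟨w, hw⟩
  have : ⟪t, u⟫ = 0 := by
    rw [← hw, sum_inner]
    refine Finset.sum_eq_zero fun i _ => ?_
    split_ifs with hi
    · rw [inner_smul_left, hu.2 i hi, mul_zero]
    · rw [zero_smul, inner_zero_left]
  exact one_ne_zero (hu.1.symm.trans this)

lemma exists_isNegativeWitness_of_not_accepts (h : ¬ Accepts v t A) :
    ∃ u, IsNegativeWitness v t A u := by
  rw [accepts_iff_mem_span] at h
  set K := Submodule.span ℂ (Set.range fun i => if A i then v i else 0)
  have : FiniteDimensional ℂ K := FiniteDimensional.span_of_finite ℂ (Set.finite_range _)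
  rw [← K.orthogonal_orthogonal, Submodule.mem_orthogonal] at h
  push Not at h
  obtain ⟨u, hu, htu⟩ := h
  have htu' : ⟪t, u⟫ ≠ 0 := by rwa [← inner_conj_symm, map_ne_zero]
  refine ⟨(⟪t, u⟫)⁻¹ • u, by rw [inner_smul_right, inv_mul_cancel₀ htu'], fun i hi => ?_⟩
  have hvi : v i ∈ K := Submodule.subset_span ⟨i, if_pos hi⟩
  rw [inner_smul_right, Submodule.inner_right_of_mem_orthogonal hvi hu, mul_zero]

variable {c : ι → ℝ}

lemma posCost_nonneg (hc : 0 ≤ c) (w : ι → ℂ) : 0 ≤ posCost c w :=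
  Finset.sum_nonneg fun i _ => mul_nonneg (hc i) (sq_nonneg _)

lemma negCost_nonneg (hc : 0 ≤ c) (u : E) : 0 ≤ negCost v c u :=
  Finset.sum_nonneg fun i _ => mul_nonneg (hc i) (sq_nonneg _)

lemma witnessSize_of_accepts (h : Accepts v t A) :
    witnessSize v t A c = sInf (posCost c '' {w | IsPositiveWitness v t A w}) := by
  classical
  exact if_pos h

lemma witnessSize_of_not_accepts (h : ¬ Accepts v t A) :
    witnessSize v t A c = sInf (negCost v c '' {u | IsNegativeWitness v t A u}) := by
  classical
  exact if_neg h

lemma witnessSize_nonneg (hc : 0 ≤ c) : 0 ≤ witnessSize v t A c := by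
  by_cases h : Accepts v t A
  · rw [witnessSize_of_accepts h]
    exact Real.sInf_nonneg (Set.forall_mem_image.2 fun w _ => posCost_nonneg hc w)
  · rw [witnessSize_of_not_accepts h]
    exact Real.sInf_nonneg (Set.forall_mem_image.2 fun u _ => negCost_nonneg hc u)

lemma witnessSize_le_posCost (hc : 0 ≤ c) {w : ι → ℂ} (hw : IsPositiveWitness v t A w) :
    witnessSize v t A c ≤ posCost c w := by
  rw [witnessSize_of_accepts ⟨w, hw⟩]
  exact csInf_le ⟨0, Set.forall_mem_image.2 fun w _ => posCost_nonneg hc w⟩ ⟨w, hw, rfl⟩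

lemma witnessSize_le_negCost (hc : 0 ≤ c) {u : E} (hu : IsNegativeWitness v t A u) :
    witnessSize v t A c ≤ negCost v c u := by
  rw [witnessSize_of_not_accepts (not_accepts_of_isNegativeWitness hu)]
  exact csInf_le ⟨0, Set.forall_mem_image.2 fun u _ => negCost_nonneg hc u⟩ ⟨u, hu, rfl⟩

lemma le_witnessSize_of_accepts {a : ℝ} (h : Accepts v t A)
    (H : ∀ w, IsPositiveWitness v t A w → a ≤ posCost c w) : a ≤ witnessSize v t A c := by
  rw [witnessSize_of_accepts h]
  obtain ⟨w, hw⟩ := h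
  exact le_csInf ⟨_, w, hw, rfl⟩ (Set.forall_mem_image.2 H)

lemma le_witnessSize_of_not_accepts {a : ℝ} (h : ¬ Accepts v t A)
    (H : ∀ u, IsNegativeWitness v t A u → a ≤ negCost v c u) : a ≤ witnessSize v t A c := by
  rw [witnessSize_of_not_accepts h]
  obtain ⟨u, hu⟩ := exists_isNegativeWitness_of_not_accepts h
  exact le_csInf ⟨_, u, hu, rfl⟩ (Set.forall_mem_image.2 H)

lemma exists_isPositiveWitness_posCost_lt (h : Accepts v t A) {ε : ℝ} (hε : 0 < ε) :
    ∃ w, IsPositiveWitness v t A w ∧ posCost c w < witnessSize v t A c + ε := by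
  by_contra! H
  linarith [le_witnessSize_of_accepts h H]

lemma exists_isNegativeWitness_negCost_lt (h : ¬ Accepts v t A) {ε : ℝ} (hε : 0 < ε) :
    ∃ u, IsNegativeWitness v t A u ∧ negCost v c u < witnessSize v t A c + ε := by
  by_contra! H
  linarith [le_witnessSize_of_not_accepts h H]

lemma witnessSize_mono {c' : ι → ℝ} (hc : 0 ≤ c) (hcc' : c ≤ c') :
    witnessSize v t A c ≤ witnessSize v t A c' := by
  by_cases h : Accepts v t A
  · refine le_witnessSize_of_accepts h fun w hw => (witnessSize_le_posCost hc hw).trans ?_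
    exact Finset.sum_le_sum fun i _ => mul_le_mul_of_nonneg_right (hcc' i) (sq_nonneg _)
  · refine le_witnessSize_of_not_accepts h fun u hu => (witnessSize_le_negCost hc hu).trans ?_
    exact Finset.sum_le_sum fun i _ => mul_le_mul_of_nonneg_right (hcc' i) (sq_nonneg _)

lemma witnessSize_smul {M : ℝ} (hM : 0 ≤ M) :
    witnessSize v t A (M • c) = M * witnessSize v t A c := by
  have hpos : ∀ w, posCost (M • c) w = M * posCost c w := fun w => by
    simp only [posCost, Finset.mul_sum, Pi.smul_apply, smul_eq_mul, mul_assoc]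
  have hneg : ∀ u, negCost v (M • c) u = M * negCost v c u := fun u => by
    simp only [negCost, Finset.mul_sum, Pi.smul_apply, smul_eq_mul, mul_assoc]
  by_cases h : Accepts v t A
  · rw [witnessSize_of_accepts h, witnessSize_of_accepts h, funext hpos, ← smul_eq_mul,
      ← Real.sInf_smul_of_nonneg hM, ← Set.image_smul, Set.image_image]
    rfl
  · rw [witnessSize_of_not_accepts h, witnessSize_of_not_accepts h, funext hneg, ← smul_eq_mul,
      ← Real.sInf_smul_of_nonneg hM, ← Set.image_smul, Set.image_image]
    rfl

lemma accepts_congr {A' : ι → Prop} [DecidablePred A'] (h : ∀ i, A i ↔ A' i) :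
    Accepts v t A ↔ Accepts v t A' := by
  obtain rfl : A = A' := funext fun i => propext (h i)
  congr!

lemma witnessSize_congr {A' : ι → Prop} [DecidablePred A'] (h : ∀ i, A i ↔ A' i) :
    witnessSize v t A c = witnessSize v t A' c := by
  obtain rfl : A = A' := funext fun i => propext (h i)
  congr!

end Witness

section Reindex

variable {ι ι' E E' : Type*} [NormedAddCommGroup E] [InnerProductSpace ℂ E]
  [NormedAddCommGroup E'] [InnerProductSpace ℂ E'] {v : ι → E} {t : E}
  (e : ι ≃ ι') (L : E ≃ₗᵢ[ℂ] E') (B : ι' → Prop)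

lemma isNegativeWitness_reindex_iff {u : E} :
    IsNegativeWitness (fun i' => L (v (e.symm i'))) (L t) B (L u) ↔
      IsNegativeWitness v t (fun i => B (e i)) u := by
  simp only [IsNegativeWitness, L.inner_map_map, e.forall_congr_left, e.apply_symm_apply]

variable [Fintype ι] [Fintype ι'] [DecidablePred B]

lemma isPositiveWitness_reindex_iff {w : ι' → ℂ} :
    IsPositiveWitness (fun i' => L (v (e.symm i'))) (L t) B w ↔
      IsPositiveWitness v t (fun i => B (e i)) (fun i => w (e i)) := by
  rw [IsPositiveWitness, IsPositiveWitness, ← e.sum_comp, ← L.injective.eq_iff, map_sum]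
  simp only [map_smul, e.symm_apply_apply]

lemma accepts_reindex_iff :
    Accepts (fun i' => L (v (e.symm i'))) (L t) B ↔ Accepts v t (fun i => B (e i)) :=
  ⟨fun ⟨w, hw⟩ => ⟨_, (isPositiveWitness_reindex_iff e L B).1 hw⟩, fun ⟨w, hw⟩ =>
    ⟨fun i' => w (e.symm i'), (isPositiveWitness_reindex_iff e L B).2 (by simpa using hw)⟩⟩

lemma witnessSize_reindex (c : ι' → ℝ) :
    witnessSize (fun i' => L (v (e.symm i'))) (L t) B c =
      witnessSize v t (fun i => B (e i)) (fun i => c (e i)) := by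
  by_cases h : Accepts v t (fun i => B (e i))
  · rw [witnessSize_of_accepts h, witnessSize_of_accepts ((accepts_reindex_iff e L B).2 h)]
    congr 1
    ext r
    simp only [Set.mem_image, Set.mem_ofPred_eq, isPositiveWitness_reindex_iff]
    constructor
    · rintro ⟨w, hw, rfl⟩
      exact ⟨_, hw, by simp only [posCost, ← e.sum_comp]⟩
    · rintro ⟨w, hw, rfl⟩
      exact ⟨fun i' => w (e.symm i'), by simpa using hw, by simp only [posCost, ← e.sum_comp,
        e.symm_apply_apply]⟩
  · rw [witnessSize_of_not_accepts h,
      witnessSize_of_not_accepts (mt (accepts_reindex_iff e L B).1 h)]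
    congr 1
    ext r
    simp only [Set.mem_image, Set.mem_ofPred_eq, L.surjective.exists, isNegativeWitness_reindex_iff,
      negCost, ← e.sum_comp, L.inner_map_map, e.symm_apply_apply]

end Reindex

section Composition

open Classical WithLp

variable {ι E : Type*} [NormedAddCommGroup E] [InnerProductSpace ℂ E]
  {κ : ι → Type*} {F : ι → Type*} [∀ i, NormedAddCommGroup (F i)]
  [∀ i, InnerProductSpace ℂ (F i)]

/-- Substitution of the family `(u i, s i)` for the input vector `v i`: in the space
`E × Π i, F i`, the vector `v i` becomes `(v i, -s i)`, so it can only be used together with a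
combination of the `u i` reaching `s i`. -/
def compInput (v : ι → E) (u : ∀ i, κ i → F i) (s : ∀ i, F i) :
    ι ⊕ (Σ i, κ i) → WithLp 2 (E × PiLp 2 F)
  | .inl i => toLp 2 (v i, -PiLp.single 2 i (s i))
  | .inr σ => toLp 2 (0, PiLp.single 2 σ.1 (u σ.1 σ.2))

def compTarget (F : ι → Type*) [∀ i, NormedAddCommGroup (F i)] (t : E) :
    WithLp 2 (E × PiLp 2 F) :=
  toLp 2 (t, 0)

def compAvail (B : ∀ i, κ i → Prop) : ι ⊕ (Σ i, κ i) → Prop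
  | .inl _ => True
  | .inr σ => B σ.1 σ.2

instance (B : ∀ i, κ i → Prop) [∀ i, DecidablePred (B i)] : DecidablePred (compAvail B)
  | .inl _ => instDecidableTrue
  | .inr σ => inferInstanceAs (Decidable (B σ.1 σ.2))

def compWeight (c : ∀ i, κ i → ℝ) : ι ⊕ (Σ i, κ i) → ℝ
  | .inl _ => 0
  | .inr σ => c σ.1 σ.2

def compPosWitness (w : ι → ℂ) (γ : ∀ i, κ i → ℂ) : ι ⊕ (Σ i, κ i) → ℂ
  | .inl i => w i
  | .inr σ => w σ.1 * γ σ.1 σ.2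

def compNegWitness (v : ι → E) (y : E) (z : ∀ i, F i) : WithLp 2 (E × PiLp 2 F) :=
  toLp 2 (y, toLp 2 fun i => ⟪v i, y⟫ • z i)

variable {v : ι → E} {t : E} {u : ∀ i, κ i → F i} {s : ∀ i, F i} {B : ∀ i, κ i → Prop}
  [∀ i, DecidablePred (B i)] {c : ∀ i, κ i → ℝ}

lemma compWeight_nonneg (hc : ∀ i, 0 ≤ c i) : 0 ≤ compWeight c := by
  rintro (i | ⟨i, k⟩)
  exacts [le_rfl, hc i k]

variable [Fintype ι]

lemma inner_compInput_inl (i : ι) (y : E) (ζ : PiLp 2 F) :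
    ⟪compInput v u s (.inl i), toLp 2 (y, ζ)⟫ = ⟪v i, y⟫ - ⟪s i, ζ i⟫ := by
  simp [compInput, PiLp.inner_single_left, sub_eq_add_neg]

lemma inner_compInput_inr (σ : Σ i, κ i) (y : E) (ζ : PiLp 2 F) :
    ⟪compInput v u s (.inr σ), toLp 2 (y, ζ)⟫ = ⟪u σ.1 σ.2, ζ σ.1⟫ := by
  simp [compInput, PiLp.inner_single_left]

variable [∀ i, Fintype (κ i)]

lemma sum_smul_compInput (W : ι ⊕ (Σ i, κ i) → ℂ) :
    ∑ a, W a • compInput v u s a = toLp 2 (∑ i, W (.inl i) • v i,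
      toLp 2 fun i => ∑ k, W (.inr ⟨i, k⟩) • u i k - W (.inl i) • s i) := by
  refine ofLp_injective 2 (Prod.ext ?_ ?_)
  · simp [Fintype.sum_sum_type, compInput, ofLp_sum, Prod.fst_sum]
  · refine PiLp.ext fun j => ?_
    simp [Fintype.sum_sum_type, Fintype.sum_sigma, compInput, ofLp_sum, Prod.snd_sum]
    rw [Finset.sum_eq_single j (fun i _ hi => by simp [Pi.single_eq_of_ne' hi]) (by simp),
      Finset.sum_eq_single j
        (fun i _ hi => Finset.sum_eq_zero fun k _ => by simp [Pi.single_eq_of_ne' hi]) (by simp)]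
    simp only [Pi.single_eq_same]
    abel

lemma isPositiveWitness_comp {w : ι → ℂ} {γ : ∀ i, κ i → ℂ}
    (hw : IsPositiveWitness v t (fun i => Accepts (u i) (s i) (B i)) w)
    (hγ : ∀ i, Accepts (u i) (s i) (B i) → IsPositiveWitness (u i) (s i) (B i) (γ i)) :
    IsPositiveWitness (compInput v u s) (compTarget F t) (compAvail B)
      (compPosWitness (fun i => if Accepts (u i) (s i) (B i) then w i else 0) γ) := by
  rw [IsPositiveWitness, sum_smul_compInput]
  refine congrArg (toLp 2) (Prod.ext ?_ ?_)
  · simpa [compAvail, compPosWitness, IsPositiveWitness] using hw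
  refine PiLp.ext fun i => ?_
  by_cases hi : Accepts (u i) (s i) (B i)
  · have hγi := hγ i hi
    rw [IsPositiveWitness] at hγi
    simp only [compAvail, compPosWitness, if_pos hi, if_true]
    rw [ofLp_zero, Pi.zero_apply, sub_eq_zero, ← hγi, Finset.smul_sum]
    exact Finset.sum_congr rfl fun k _ => by split_ifs <;> simp [smul_smul]
  · simp [compAvail, compPosWitness, hi]

lemma posCost_compPosWitness (c : ∀ i, κ i → ℝ) (w : ι → ℂ) (γ : ∀ i, κ i → ℂ) :
    posCost (compWeight c) (compPosWitness w γ) = ∑ i, ‖w i‖ ^ 2 * posCost (c i) (γ i) := by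
  simp only [posCost, Fintype.sum_sum_type, Fintype.sum_sigma, compWeight, compPosWitness,
    zero_mul, Finset.sum_const_zero, zero_add, Finset.mul_sum, norm_mul, mul_pow]
  exact Finset.sum_congr rfl fun i _ => Finset.sum_congr rfl fun k _ => by ring

lemma isNegativeWitness_comp {y : E} {z : ∀ i, F i}
    (hy : IsNegativeWitness v t (fun i => Accepts (u i) (s i) (B i)) y)
    (hz : ∀ i, ¬ Accepts (u i) (s i) (B i) → IsNegativeWitness (u i) (s i) (B i) (z i)) :
    IsNegativeWitness (compInput v u s) (compTarget F t) (compAvail B) (compNegWitness v y z) := by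
  refine ⟨by simpa [compTarget, compNegWitness] using hy.1, ?_⟩
  rintro (i | ⟨i, k⟩) hA
  · rw [compNegWitness, inner_compInput_inl]
    by_cases hi : Accepts (u i) (s i) (B i)
    · simp [hy.2 i hi]
    · simp [(hz i hi).1]
  · rw [compNegWitness, inner_compInput_inr]
    by_cases hi : Accepts (u i) (s i) (B i)
    · simp [hy.2 i hi]
    · simp [(hz i hi).2 k hA]

lemma negCost_compNegWitness (c : ∀ i, κ i → ℝ) (y : E) (z : ∀ i, F i) :
    negCost (compInput v u s) (compWeight c) (compNegWitness v y z) =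
      ∑ i, ‖⟪v i, y⟫‖ ^ 2 * negCost (u i) (c i) (z i) := by
  simp only [negCost, Fintype.sum_sum_type, Fintype.sum_sigma, compWeight, compNegWitness,
    inner_compInput_inr, zero_mul, Finset.sum_const_zero, zero_add, Finset.mul_sum]
  refine Finset.sum_congr rfl fun i _ => Finset.sum_congr rfl fun k _ => ?_
  simp only [inner_smul_right, norm_mul, mul_pow]
  ring

theorem accepts_comp_iff :
    Accepts (compInput v u s) (compTarget F t) (compAvail B) ↔
      Accepts v t (fun i => Accepts (u i) (s i) (B i)) := by
  constructor
  · intro h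
    by_contra hn
    obtain ⟨y, hy⟩ := exists_isNegativeWitness_of_not_accepts hn
    have : ∀ i, ∃ z, ¬ Accepts (u i) (s i) (B i) → IsNegativeWitness (u i) (s i) (B i) z := by
      intro i
      by_cases hi : Accepts (u i) (s i) (B i)
      · exact ⟨0, absurd hi⟩
      · exact (exists_isNegativeWitness_of_not_accepts hi).imp fun _ hz _ => hz
    choose z hz using this
    exact not_accepts_of_isNegativeWitness (isNegativeWitness_comp hy hz) h
  · rintro ⟨w, hw⟩
    have : ∀ i, ∃ γ, Accepts (u i) (s i) (B i) → IsPositiveWitness (u i) (s i) (B i) γ := by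
      intro i
      by_cases hi : Accepts (u i) (s i) (B i)
      · exact hi.imp fun _ hγ _ => hγ
      · exact ⟨0, fun h => absurd h hi⟩
    choose γ hγ using this
    exact ⟨_, isPositiveWitness_comp hw hγ⟩

lemma witnessSize_comp_le_posCost (hc : ∀ i, 0 ≤ c i) {w : ι → ℂ}
    (hw : IsPositiveWitness v t (fun i => Accepts (u i) (s i) (B i)) w) :
    witnessSize (compInput v u s) (compTarget F t) (compAvail B) (compWeight c) ≤
      posCost (fun i => witnessSize (u i) (s i) (B i) (c i)) w := by
  refine le_of_forall_pos_le_add_mul (by positivity : (0 : ℝ) ≤ ∑ i, ‖w i‖ ^ 2)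
    fun δ hδ => ?_
  have : ∀ i, ∃ γ, (Accepts (u i) (s i) (B i) → IsPositiveWitness (u i) (s i) (B i) γ) ∧
      ‖if Accepts (u i) (s i) (B i) then w i else 0‖ ^ 2 * posCost (c i) γ ≤
        witnessSize (u i) (s i) (B i) (c i) * ‖w i‖ ^ 2 + δ * ‖w i‖ ^ 2 := by
    intro i
    by_cases hi : Accepts (u i) (s i) (B i)
    · obtain ⟨γ, hγ, hγc⟩ := exists_isPositiveWitness_posCost_lt (c := c i) hi hδ
      refine ⟨γ, fun _ => hγ, ?_⟩
      rw [if_pos hi]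
      nlinarith [mul_le_mul_of_nonneg_left hγc.le (sq_nonneg ‖w i‖)]
    · refine ⟨0, fun h => absurd h hi, ?_⟩
      simp only [if_neg hi, norm_zero, ne_eq, OfNat.ofNat_ne_zero, not_false_eq_true,
        zero_pow, zero_mul]
      have := witnessSize_nonneg (v := u i) (t := s i) (A := B i) (hc i)
      positivity
  choose γ hγ hγc using this
  calc _ ≤ posCost (compWeight c)
          (compPosWitness (fun i => if Accepts (u i) (s i) (B i) then w i else 0) γ) :=
        witnessSize_le_posCost (compWeight_nonneg hc) (isPositiveWitness_comp hw hγ)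
    _ ≤ _ := (posCost_compPosWitness c _ γ).trans_le (Finset.sum_le_sum fun i _ => hγc i)
    _ = _ := by rw [Finset.sum_add_distrib, ← Finset.mul_sum]; rfl

lemma witnessSize_comp_le_negCost (hc : ∀ i, 0 ≤ c i) {y : E}
    (hy : IsNegativeWitness v t (fun i => Accepts (u i) (s i) (B i)) y) :
    witnessSize (compInput v u s) (compTarget F t) (compAvail B) (compWeight c) ≤
      negCost v (fun i => witnessSize (u i) (s i) (B i) (c i)) y := by
  refine le_of_forall_pos_le_add_mul (by positivity : (0 : ℝ) ≤ ∑ i, ‖⟪v i, y⟫‖ ^ 2)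
    fun δ hδ => ?_
  have : ∀ i, ∃ z, (¬ Accepts (u i) (s i) (B i) → IsNegativeWitness (u i) (s i) (B i) z) ∧
      ‖⟪v i, y⟫‖ ^ 2 * negCost (u i) (c i) z ≤
        witnessSize (u i) (s i) (B i) (c i) * ‖⟪v i, y⟫‖ ^ 2 + δ * ‖⟪v i, y⟫‖ ^ 2 := by
    intro i
    by_cases hi : Accepts (u i) (s i) (B i)
    · refine ⟨0, fun h => absurd hi h, ?_⟩
      simp [hy.2 i hi]
    · obtain ⟨z, hz, hzc⟩ := exists_isNegativeWitness_negCost_lt (c := c i) hi hδ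
      refine ⟨z, fun _ => hz, ?_⟩
      nlinarith [mul_le_mul_of_nonneg_left hzc.le (sq_nonneg ‖⟪v i, y⟫‖)]
  choose z hz hzc using this
  calc _ ≤ negCost (compInput v u s) (compWeight c) (compNegWitness v y z) :=
        witnessSize_le_negCost (compWeight_nonneg hc) (isNegativeWitness_comp hy hz)
    _ ≤ _ := (negCost_compNegWitness c y z).trans_le (Finset.sum_le_sum fun i _ => hzc i)
    _ = _ := by rw [Finset.sum_add_distrib, ← Finset.mul_sum]; rfl

theorem witnessSize_comp_le (hc : ∀ i, 0 ≤ c i) :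
    witnessSize (compInput v u s) (compTarget F t) (compAvail B) (compWeight c) ≤
      witnessSize v t (fun i => Accepts (u i) (s i) (B i))
        (fun i => witnessSize (u i) (s i) (B i) (c i)) := by
  by_cases h : Accepts v t (fun i => Accepts (u i) (s i) (B i))
  · exact le_witnessSize_of_accepts h fun w hw => witnessSize_comp_le_posCost hc hw
  · exact le_witnessSize_of_not_accepts h fun y hy => witnessSize_comp_le_negCost hc hy

end Composition

section Dual

open WithLp

variable {ι κ E : Type*} [NormedAddCommGroup E] [InnerProductSpace ℂ E]

/-- The dual family: its free vectors are the rows `(⟪t, b k⟫, (⟪v i, b k⟫)ᵢ)` of the adjoint of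
`[t | v]`, and the vector of a labelled input `i` (one with `L i`) is the basis vector `eᵢ`. -/
def dualInput [Fintype κ] [DecidableEq ι] (b : OrthonormalBasis κ ℂ E) (v : ι → E) (t : E)
    (L : ι → Prop) [DecidablePred L] :
    κ ⊕ ι → WithLp 2 (ℂ × EuclideanSpace ℂ ι)
  | .inl k => toLp 2 (⟪t, b k⟫, toLp 2 fun i => ⟪v i, b k⟫)
  | .inr i => toLp 2 (0, if L i then EuclideanSpace.single i 1 else 0)

def dualTarget (ι : Type*) : WithLp 2 (ℂ × EuclideanSpace ℂ ι) :=
  toLp 2 (1, 0)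

def dualAvail (L A : ι → Prop) : κ ⊕ ι → Prop
  | .inl _ => True
  | .inr i => L i → ¬ A i

instance (L A : ι → Prop) [DecidablePred L] [DecidablePred A] :
    DecidablePred (dualAvail (κ := κ) L A)
  | .inl _ => instDecidableTrue
  | .inr i => inferInstanceAs (Decidable (L i → ¬ A i))

def dualWeight (c : ι → ℝ) : κ ⊕ ι → ℝ
  | .inl _ => 0
  | .inr i => c i

def dualPosWitness [Fintype κ] (b : OrthonormalBasis κ ℂ E) (v : ι → E) (y : E) : κ ⊕ ι → ℂ
  | .inl k => ⟪b k, y⟫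
  | .inr i => -⟪v i, y⟫

def dualNegWitness (A : ι → Prop) [DecidablePred A] (w : ι → ℂ) :
    WithLp 2 (ℂ × EuclideanSpace ℂ ι) :=
  toLp 2 (1, toLp 2 fun i => -if A i then w i else 0)

variable {c : ι → ℝ}

lemma dualWeight_nonneg (hc : 0 ≤ c) : 0 ≤ (dualWeight c : κ ⊕ ι → ℝ) := by
  rintro (k | i)
  exacts [le_rfl, hc i]

variable [Fintype ι] [Fintype κ] (b : OrthonormalBasis κ ℂ E) {v : ι → E} {t : E}

lemma posCost_dualPosWitness (y : E) :
    posCost (dualWeight c) (dualPosWitness b v y) = negCost v c y := by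
  simp [posCost, negCost, Fintype.sum_sum_type, dualWeight, dualPosWitness]

variable [DecidableEq ι] {L A : ι → Prop} [DecidablePred L] [DecidablePred A]

lemma isPositiveWitness_dual (hL : ∀ i, ¬ L i → A i) {y : E} (hy : IsNegativeWitness v t A y) :
    IsPositiveWitness (dualInput b v t L) (dualTarget ι) (dualAvail L A)
      (dualPosWitness b v y) := by
  rw [IsPositiveWitness, Fintype.sum_sum_type]
  refine ofLp_injective 2 (Prod.ext ?_ ?_)
  · simp [dualInput, dualAvail, dualPosWitness, dualTarget, ofLp_sum, Prod.fst_sum, mul_comm,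
      b.sum_inner_mul_inner, hy.1]
  · refine PiLp.ext fun j => ?_
    simp [dualInput, dualAvail, dualPosWitness, dualTarget, ofLp_sum, Prod.snd_sum, mul_comm,
      b.sum_inner_mul_inner]
    rw [Finset.sum_eq_single j
      (fun i _ hij => by by_cases L i <;> by_cases A i <;> simp [*, Ne.symm hij]) (by simp)]
    by_cases hA : A j
    · simp [hy.2 j hA]
    · simp [hA, not_not.mp (mt (hL j) hA)]

lemma isNegativeWitness_dual {w : ι → ℂ} (hw : IsPositiveWitness v t A w) :
    IsNegativeWitness (dualInput b v t L) (dualTarget ι) (dualAvail L A) (dualNegWitness A w) := by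
  refine ⟨by simp [dualTarget, dualNegWitness], ?_⟩
  rintro (k | i) hi
  · simp only [dualInput, dualNegWitness, WithLp.prod_inner_apply, PiLp.inner_apply]
    rw [← hw]
    simp only [sum_inner, ← Finset.sum_add_distrib]
    refine Finset.sum_eq_zero fun i _ => ?_
    split_ifs <;> simp [inner_smul_left]
  · have hi : L i → ¬ A i := hi
    by_cases hLi : L i <;>
      simp [dualInput, dualNegWitness, EuclideanSpace.inner_single_left, hLi, hi]

lemma negCost_dualNegWitness_le (hc : 0 ≤ c) (w : ι → ℂ) :
    negCost (dualInput b v t L) (dualWeight c) (dualNegWitness A w) ≤ posCost c w := by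
  simp only [negCost, posCost, Fintype.sum_sum_type, dualWeight, zero_mul, Finset.sum_const_zero,
    zero_add]
  refine Finset.sum_le_sum fun i _ => mul_le_mul_of_nonneg_left ?_ (hc i)
  by_cases hLi : L i <;> by_cases hAi : A i <;>
    simp [dualInput, dualNegWitness, EuclideanSpace.inner_single_left, hLi, hAi]

theorem accepts_dual_iff (hL : ∀ i, ¬ L i → A i) :
    Accepts (dualInput b v t L) (dualTarget ι) (dualAvail L A) ↔ ¬ Accepts v t A := by
  refine ⟨fun h ⟨w, hw⟩ => not_accepts_of_isNegativeWitness (isNegativeWitness_dual b hw) h,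
    fun h => ?_⟩
  obtain ⟨y, hy⟩ := exists_isNegativeWitness_of_not_accepts h
  exact ⟨_, isPositiveWitness_dual b hL hy⟩

theorem witnessSize_dual_le (hc : 0 ≤ c) (hL : ∀ i, ¬ L i → A i) :
    witnessSize (dualInput b v t L) (dualTarget ι) (dualAvail L A) (dualWeight c) ≤
      witnessSize v t A c := by
  by_cases h : Accepts v t A
  · exact le_witnessSize_of_accepts h fun w hw =>
      (witnessSize_le_negCost (dualWeight_nonneg hc) (isNegativeWitness_dual b hw)).trans
        (negCost_dualNegWitness_le b hc w)
  · exact le_witnessSize_of_not_accepts h fun y hy =>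
      (witnessSize_le_posCost (dualWeight_nonneg hc) (isPositiveWitness_dual b hL hy)).trans_eq
        (posCost_dualPosWitness b y)

end Dual

variable {n m : ℕ}

lemma eval_iff_accepts (P : SpanProgram n) (x : Fin n → Bool) :
    P.eval x ↔ Accepts P.input P.target (P.avail x) :=
  Iff.rfl

lemma wsizex_eq_witnessSize (P : SpanProgram n) (s : Fin n → ℝ) (x : Fin n → Bool) :
    P.wsizex s x = witnessSize P.input P.target (P.avail x) (P.cw s) := by
  by_cases h : P.eval x
  · rw [wsizex, if_pos h, witnessSize_of_accepts h]
    congr 1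
    ext r
    simp [eq_comm, IsPositiveWitness, posCost]
  · rw [wsizex, if_neg h, witnessSize_of_not_accepts h]
    congr 1
    ext r
    simp [eq_comm, IsNegativeWitness, negCost, and_assoc]

/-- Constructions are carried out for families over arbitrary finite index types and inner
product spaces, and turned into a `SpanProgram` by enumerating the index type and taking
coordinates in an orthonormal basis. -/
@[reducible]
def ofFamily {ι E : Type*} [Fintype ι] [NormedAddCommGroup E] [InnerProductSpace ℂ E]
    [FiniteDimensional ℂ E] (label : ι → Option (Fin n × Bool)) (v : ι → E) (t : E) :
    SpanProgram n where
  d := Module.finrank ℂ E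
  m := Fintype.card ι
  label i := label ((Fintype.equivFin ι).symm i)
  target := (stdOrthonormalBasis ℂ E).repr t
  input i := (stdOrthonormalBasis ℂ E).repr (v ((Fintype.equivFin ι).symm i))

section OfFamily

variable {ι E : Type*} [Fintype ι] [NormedAddCommGroup E] [InnerProductSpace ℂ E]
  [FiniteDimensional ℂ E] (label : ι → Option (Fin n × Bool)) (v : ι → E) (t : E)

@[simp]
lemma label_ofFamily (i : ι) : (ofFamily label v t).label (Fintype.equivFin ι i) = label i := by
  simp

lemma eval_ofFamily (x : Fin n → Bool) :
    (ofFamily label v t).eval x ↔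
      Accepts v t fun i => (ofFamily label v t).avail x (Fintype.equivFin ι i) :=
  accepts_reindex_iff _ _ _

lemma wsizex_ofFamily (s : Fin n → ℝ) (x : Fin n → Bool) :
    (ofFamily label v t).wsizex s x =
      witnessSize v t (fun i => (ofFamily label v t).avail x (Fintype.equivFin ι i))
        (fun i => (ofFamily label v t).cw s (Fintype.equivFin ι i)) :=
  (wsizex_eq_witnessSize _ _ _).trans (witnessSize_reindex _ _ _ _)

end OfFamily

section Label

variable {P Q : SpanProgram n} {x : Fin n → Bool} {s : Fin n → ℝ} {i : Fin P.m}

lemma avail_iff_of_label_eq {i' : Fin Q.m} (h : P.label i = Q.label i') :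
    P.avail x i ↔ Q.avail x i' := by
  simp only [avail, h]

lemma cw_eq_of_label_eq {i' : Fin Q.m} (h : P.label i = Q.label i') : P.cw s i = Q.cw s i' := by
  simp only [cw, h]

lemma avail_of_label_eq_none (h : P.label i = none) : P.avail x i :=
  Or.inl h

lemma cw_of_label_eq_none (h : P.label i = none) : P.cw s i = 0 := by
  simp [cw, h]

lemma avail_iff_of_label_eq_some {j : Fin n} {b : Bool} (h : P.label i = some (j, b)) :
    P.avail x i ↔ x j = b := by
  simp [avail, h, eq_comm]

lemma cw_of_label_eq_some {j : Fin n} {b : Bool} (h : P.label i = some (j, b)) :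
    P.cw s i = s j := by
  simp [cw, h]

variable (P)

lemma cw_nonneg (hs : 0 ≤ s) (i : Fin P.m) : 0 ≤ P.cw s i := by
  rcases h : P.label i with _ | ⟨j, b⟩
  exacts [(cw_of_label_eq_none h).ge, (cw_of_label_eq_some h).symm ▸ hs j]

lemma cw_le_mul {r : Fin n → ℝ} {M : ℝ} (hr : ∀ j, r j ≤ M) (i : Fin P.m) :
    P.cw r i ≤ M * P.cw (fun _ => 1) i := by
  rcases h : P.label i with _ | ⟨j, b⟩
  · simp [cw_of_label_eq_none h]
  · simpa [cw_of_label_eq_some h] using hr j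

end Label

section WitnessSize

variable (P : SpanProgram n) {s : Fin n → ℝ}

lemma wsizex_nonneg (hs : 0 ≤ s) (x : Fin n → Bool) : 0 ≤ P.wsizex s x :=
  (wsizex_eq_witnessSize P s x).symm ▸ witnessSize_nonneg (P.cw_nonneg hs)

lemma wsizex_le_wsizeD (s : Fin n → ℝ) (x : Fin n → Bool) : P.wsizex s x ≤ P.wsizeD s Set.univ :=
  le_csSup ((Set.finite_range (P.wsizex s)).bddAbove.mono
    (by rintro _ ⟨x, -, rfl⟩; exact ⟨x, rfl⟩))
    ⟨x, trivial, rfl⟩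

lemma wsizeD_le {a : ℝ} (h : ∀ x, P.wsizex s x ≤ a) : P.wsizeD s Set.univ ≤ a :=
  csSup_le ⟨_, fun _ => false, trivial, rfl⟩ (by rintro _ ⟨x, -, rfl⟩; exact h x)

lemma wsizeD_nonneg (hs : 0 ≤ s) : 0 ≤ P.wsizeD s Set.univ :=
  (P.wsizex_nonneg hs fun _ => false).trans (P.wsizex_le_wsizeD s _)

lemma wsizex_le_mul {r : Fin n → ℝ} {M : ℝ} (hr₀ : 0 ≤ r) (hM : 0 ≤ M) (hr : ∀ j, r j ≤ M)
    (x : Fin n → Bool) : P.wsizex r x ≤ M * P.wsizex (fun _ => 1) x := by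
  rw [wsizex_eq_witnessSize, wsizex_eq_witnessSize, ← witnessSize_smul hM]
  exact witnessSize_mono (P.cw_nonneg hr₀) (P.cw_le_mul hr)

end WitnessSize

section Dual

variable (P : SpanProgram n) {x : Fin n → Bool}

@[reducible]
def dual : SpanProgram n :=
  ofFamily (Sum.elim (fun _ => none) fun i => (P.label i).map fun jb => (jb.1, !jb.2))
    (dualInput (EuclideanSpace.basisFun (Fin P.d) ℂ) P.input P.target fun i => P.label i ≠ none)
    (dualTarget (Fin P.m))

lemma avail_dual_iff (a : Fin P.d ⊕ Fin P.m) :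
    P.dual.avail x (Fintype.equivFin _ a) ↔
      dualAvail (fun i => P.label i ≠ none) (P.avail x) a := by
  rcases a with k | i
  · exact iff_of_true (avail_of_label_eq_none (label_ofFamily _ _ _ _)) trivial
  · rcases h : P.label i with _ | ⟨j, b⟩
    · exact iff_of_true (avail_of_label_eq_none (by simp [h])) fun hi => absurd h hi
    · rw [avail_iff_of_label_eq_some (j := j) (b := !b) (by simp [h]), dualAvail,
        avail_iff_of_label_eq_some h]
      cases b <;> simp [h]

lemma cw_dual (s : Fin n → ℝ) (a : Fin P.d ⊕ Fin P.m) :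
    P.dual.cw s (Fintype.equivFin _ a) = dualWeight (P.cw s) a := by
  rcases a with k | i
  · exact cw_of_label_eq_none (label_ofFamily _ _ _ _)
  · rcases h : P.label i with _ | ⟨j, b⟩
    · rw [dualWeight, cw_of_label_eq_none h, cw_of_label_eq_none (by simp [h])]
    · rw [dualWeight, cw_of_label_eq_some h, cw_of_label_eq_some (j := j) (b := !b) (by simp [h])]

theorem eval_dual : P.dual.eval x ↔ ¬ P.eval x := by
  rw [dual, eval_ofFamily, accepts_congr (P.avail_dual_iff),
    accepts_dual_iff _ fun _ hi => avail_of_label_eq_none (not_not.1 hi)]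
  rfl

theorem wsizex_dual_le {s : Fin n → ℝ} (hs : 0 ≤ s) : P.dual.wsizex s x ≤ P.wsizex s x := by
  rw [dual, wsizex_ofFamily, witnessSize_congr (P.avail_dual_iff), funext (P.cw_dual s),
    wsizex_eq_witnessSize]
  exact witnessSize_dual_le _ (P.cw_nonneg hs) fun _ hi => avail_of_label_eq_none (not_not.1 hi)

end Dual

@[reducible]
def acceptAll (m : ℕ) : SpanProgram m :=
  ⟨0, 0, Fin.elim0, 0, Fin.elim0⟩

lemma eval_acceptAll (x : Fin m → Bool) : (acceptAll m).eval x :=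
  ⟨Fin.elim0, Subsingleton.elim _ _⟩

lemma wsizex_acceptAll (s : Fin m → ℝ) (x : Fin m → Bool) : (acceptAll m).wsizex s x = 0 := by
  rw [wsizex_eq_witnessSize, witnessSize_of_accepts (eval_acceptAll x)]
  have : posCost ((acceptAll m).cw s) = fun _ => 0 := funext fun w => by simp [posCost]
  obtain ⟨w, hw⟩ := eval_acceptAll x
  rw [this, Set.Nonempty.image_const ⟨w, hw⟩, csInf_singleton]

def literalProgram (P : SpanProgram n) (Pj : Fin n → SpanProgram m) (i : Fin P.m) :
    SpanProgram m :=
  match P.label i with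
  | none => acceptAll m
  | some (j, true) => Pj j
  | some (j, false) => (Pj j).dual

section LiteralProgram

variable (P : SpanProgram n) (Pj : Fin n → SpanProgram m) {x : Fin m → Bool}

lemma eval_literalProgram {y : Fin n → Bool} (hy : ∀ j, (Pj j).eval x ↔ y j = true)
    (i : Fin P.m) : (P.literalProgram Pj i).eval x ↔ P.avail y i := by
  rcases h : P.label i with _ | ⟨j, _ | _⟩
  · simp only [literalProgram, h]
    exact iff_of_true (eval_acceptAll x) (avail_of_label_eq_none h)
  · simp [literalProgram, h, eval_dual, hy, avail_iff_of_label_eq_some h]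
  · simp [literalProgram, h, hy, avail_iff_of_label_eq_some h]

lemma wsizex_literalProgram_le {s : Fin m → ℝ} (hs : 0 ≤ s) (i : Fin P.m) :
    (P.literalProgram Pj i).wsizex s x ≤ P.cw (fun j => (Pj j).wsizeD s Set.univ) i := by
  rcases h : P.label i with _ | ⟨j, _ | _⟩
  · simp [literalProgram, h, wsizex_acceptAll, cw_of_label_eq_none h]
  · simpa [literalProgram, h, cw_of_label_eq_some h] using
      ((Pj j).wsizex_dual_le hs).trans ((Pj j).wsizex_le_wsizeD s x)
  · simpa [literalProgram, h, cw_of_label_eq_some h] using (Pj j).wsizex_le_wsizeD s x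

end LiteralProgram

@[reducible]
def comp (P : SpanProgram n) (R : Fin P.m → SpanProgram m) : SpanProgram m :=
  ofFamily (Sum.elim (fun _ => none) fun σ => (R σ.1).label σ.2)
    (compInput P.input (fun i => (R i).input) (fun i => (R i).target))
    (compTarget (fun i => EuclideanSpace ℂ (Fin (R i).d)) P.target)

section Comp

open Classical

variable (P : SpanProgram n) (R : Fin P.m → SpanProgram m) {x : Fin m → Bool}

lemma avail_comp_iff (a : Fin P.m ⊕ Σ i, Fin (R i).m) :
    (P.comp R).avail x (Fintype.equivFin _ a) ↔ compAvail (fun i => (R i).avail x) a := by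
  rcases a with i | σ
  · exact iff_of_true (avail_of_label_eq_none (label_ofFamily _ _ _ _)) trivial
  · exact avail_iff_of_label_eq (label_ofFamily _ _ _ _)

lemma cw_comp (s : Fin m → ℝ) (a : Fin P.m ⊕ Σ i, Fin (R i).m) :
    (P.comp R).cw s (Fintype.equivFin _ a) = compWeight (fun i => (R i).cw s) a := by
  rcases a with i | σ
  · exact cw_of_label_eq_none (label_ofFamily _ _ _ _)
  · exact cw_eq_of_label_eq (label_ofFamily _ _ _ _)

theorem eval_comp : (P.comp R).eval x ↔ Accepts P.input P.target fun i => (R i).eval x := by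
  rw [eval_ofFamily, accepts_congr (P.avail_comp_iff R), accepts_comp_iff]
  rfl

theorem wsizex_comp_le {s : Fin m → ℝ} (hs : 0 ≤ s) :
    (P.comp R).wsizex s x ≤
      witnessSize P.input P.target (fun i => (R i).eval x) fun i => (R i).wsizex s x := by
  rw [wsizex_ofFamily, witnessSize_congr (P.avail_comp_iff R), funext (P.cw_comp R s)]
  simp only [wsizex_eq_witnessSize]
  exact witnessSize_comp_le fun i => (R i).cw_nonneg hs

end Comp

open Classical in
theorem wsizex_comp_literalProgram_le (P : SpanProgram n) (Pj : Fin n → SpanProgram m)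
    {s : Fin m → ℝ} (hs : 0 ≤ s) {x : Fin m → Bool} {y : Fin n → Bool}
    (hy : ∀ j, (Pj j).eval x ↔ y j = true) :
    (P.comp (P.literalProgram Pj)).wsizex s x ≤
      P.wsizex (fun j => (Pj j).wsizeD s Set.univ) y := by
  calc _ ≤ _ := P.wsizex_comp_le _ hs
    _ = witnessSize P.input P.target (P.avail y) fun i => (P.literalProgram Pj i).wsizex s x :=
        witnessSize_congr (P.eval_literalProgram Pj hy)
    _ ≤ _ := witnessSize_mono (fun i => wsizex_nonneg _ hs x)
        (P.wsizex_literalProgram_le Pj hs)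
    _ = _ := (wsizex_eq_witnessSize _ _ _).symm

end SpanProgram

end

/-- span program composition.  If `P` computes `f` and `P_j` computes `f_j`
(`j ∈ [n]`, all on the same `m` input bits), then there is a span program `Q` computing the
composition `g(x) = f(f_1(x), …, f_n(x))` with, for every cost vector `s`,
`wsize_s(Q) ≤ wsize_r(P)` where `r_j = wsize_s(P_j)`; in particular
`wsize_s(Q) ≤ wsize(P) · max_j wsize_s(P_j)`. -/
theorem spanProgram_composition (n mvars : ℕ)
    (f : (Fin n → Bool) → Bool) (fj : Fin n → (Fin mvars → Bool) → Bool)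
    (g : (Fin mvars → Bool) → Bool)
    (hg : ∀ x, g x = f (fun j => fj j x))
    (P : SpanProgram n) (hP : ∀ y, P.eval y ↔ f y = true)
    (Pj : Fin n → SpanProgram mvars) (hPj : ∀ j x, (Pj j).eval x ↔ fj j x = true) :
    ∃ Q : SpanProgram mvars,
      (∀ x, Q.eval x ↔ g x = true) ∧
      ∀ s : Fin mvars → ℝ, (∀ k, 0 ≤ s k) →
        Q.wsizeD s Set.univ
            ≤ P.wsizeD (fun j => (Pj j).wsizeD s Set.univ) Set.univ ∧
        Q.wsizeD s Set.univ
            ≤ P.wsizeD (fun _ => 1) Set.univ * ⨆ j : Fin n, (Pj j).wsizeD s Set.univ := by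
  classical
  refine ⟨P.comp (P.literalProgram Pj), fun x => ?_, fun s hs => ?_⟩
  · rw [P.eval_comp, SpanProgram.accepts_congr (P.eval_literalProgram Pj (hPj · x)),
      ← P.eval_iff_accepts, hP, hg]
  set r := fun j => (Pj j).wsizeD s Set.univ
  have hr : 0 ≤ r := fun j => (Pj j).wsizeD_nonneg hs
  have hM : 0 ≤ ⨆ j, r j := Real.iSup_nonneg hr
  have hQ : (P.comp (P.literalProgram Pj)).wsizeD s Set.univ ≤ P.wsizeD r Set.univ :=
    (P.comp _).wsizeD_le fun x =>
      (P.wsizex_comp_literalProgram_le Pj hs (hPj · x)).trans (P.wsizex_le_wsizeD r _)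
  refine ⟨hQ, hQ.trans (P.wsizeD_le fun y => ?_)⟩
  calc P.wsizex r y ≤ (⨆ j, r j) * P.wsizex (fun _ => 1) y :=
        P.wsizex_le_mul hr hM (le_ciSup (Set.finite_range r).bddAbove) y
    _ ≤ (⨆ j, r j) * P.wsizeD (fun _ => 1) Set.univ :=
        mul_le_mul_of_nonneg_left (P.wsizex_le_wsizeD _ y) hM
    _ = _ := mul_comm _ _
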